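/- arXiv:2410.07650 — 2 statements merged into one kernel-verified Lean document; each statement's English description precedes it below -/
import Mathlib

section
/- The set of all points of PG(r-1,2) can be partitioned into lines if and only if r is even; moreover, if r is odd then the multiset consisting of every point taken three times can be partitioned into lines (for r ≥ 3). -/
/-- The ambient vector space `F_2^r`. -/
abbrev Vec (r : ℕ) := Fin r → ZMod 2

/-- A line of `PG(r-1,2)`: a 2-dimensional subspace of `F_2^r`. -/
def isLine {r : ℕ} (L : Submodule (ZMod 2) (Vec r)) : Prop :=
  Module.finrank (ZMod 2) L = 2

/-- A point of `PG(r-1,2)`: a 1-dimensional subspace of `F_2^r`. -/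
def isPoint {r : ℕ} (P : Submodule (ZMod 2) (Vec r)) : Prop :=
  Module.finrank (ZMod 2) P = 1

/-- A hyperplane of `PG(r-1,2)`: an `(r-1)`-dimensional subspace of `F_2^r`. -/
def isHyperplane {r : ℕ} (H : Submodule (ZMod 2) (Vec r)) : Prop :=
  Module.finrank (ZMod 2) H = r - 1

open scoped Classical in
/-- The number of members of the multiset `S` (of lines) contained in the subspace `H`. -/
noncomputable def linesIn {r : ℕ} (S : Multiset (Submodule (ZMod 2) (Vec r)))
    (H : Submodule (ZMod 2) (Vec r)) : ℕ :=
  Multiset.card (S.filter (fun L => L ≤ H))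

/-- An `(n,r,s)` system: a multiset of `n` lines of `PG(r-1,2)` such that every hyperplane
contains at most `s` of them and some hyperplane contains exactly `s` of them. -/
def IsSystem (r n s : ℕ) (S : Multiset (Submodule (ZMod 2) (Vec r))) : Prop :=
  Multiset.card S = n ∧ (∀ L ∈ S, isLine L) ∧
    (∀ H, isHyperplane H → linesIn S H ≤ s) ∧
    (∃ H, isHyperplane H ∧ linesIn S H = s)

open scoped Classical in
/-- The number of members of the multiset `𝒱` of subspaces containing the subspace `P`. -/
noncomputable def coverCount {r : ℕ} (𝒱 : Multiset (Submodule (ZMod 2) (Vec r)))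
    (P : Submodule (ZMod 2) (Vec r)) : ℕ :=
  Multiset.card (𝒱.filter (fun W => P ≤ W))

/-!
Counting incidences between nonzero vectors and lines shows that a `σ`-fold line partition of
`F_2^r` has `σ (2^r - 1) = 3 · #lines`; for `σ = 1` this forces `3 ∣ 2^r - 1`, i.e. `r` even.

Conversely, a `σ`-fold line partition of `V` lifts to one of `V × F_4`. Identify each line `L`
with `F_4` by an `F_2`-isomorphism `g`; the four lines `{(x, c * g x) | x ∈ L}`, `c ∈ F_4`,
cover every `(v, w)` with `0 ≠ v ∈ L` exactly once (`c = w / g v`), and `σ` copies of `0 × F_4`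
cover the points `(0, w)`. Starting from the empty spread of `F_2^0` and from the Fano plane
(every point on three of its seven lines) gives the even and the odd case.
-/

open Module

section LinePartition

open scoped Classical

variable {K V W : Type*} [Field K] [AddCommGroup V] [Module K V] [AddCommGroup W] [Module K W]

noncomputable def lineCount (𝓛 : Multiset (Submodule K V)) (v : V) : ℕ :=
  𝓛.countP (v ∈ ·)

structure IsLinePartition (σ : ℕ) (𝓛 : Multiset (Submodule K V)) : Prop where
  finrank_eq_two : ∀ L ∈ 𝓛, finrank K L = 2
  lineCount_eq : ∀ v : V, v ≠ 0 → lineCount 𝓛 v = σ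

lemma lineCount_add (𝓛 𝓜 : Multiset (Submodule K V)) (v : V) :
    lineCount (𝓛 + 𝓜) v = lineCount 𝓛 v + lineCount 𝓜 v :=
  Multiset.countP_add _ _ _

lemma lineCount_cons (L : Submodule K V) (𝓛 : Multiset (Submodule K V)) (v : V) :
    lineCount (L ::ₘ 𝓛) v = lineCount 𝓛 v + if v ∈ L then 1 else 0 :=
  Multiset.countP_cons _ _ _

lemma lineCount_bind {ι : Type*} (s : Multiset ι) (f : ι → Multiset (Submodule K V)) (v : V) :
    lineCount (s.bind f) v = (s.map fun i => lineCount (f i) v).sum := by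
  induction s using Multiset.induction with
  | empty => simp [lineCount]
  | cons i s ih => rw [Multiset.cons_bind, lineCount_add, ih, Multiset.map_cons, Multiset.sum_cons]

lemma sum_map_ite_mem_eq_lineCount (𝓛 : Multiset (Submodule K V)) (v : V) :
    (𝓛.map fun L => if v ∈ L then 1 else 0).sum = lineCount 𝓛 v := by
  induction 𝓛 using Multiset.induction with
  | empty => simp [lineCount]
  | cons L 𝓛 ih => rw [Multiset.map_cons, Multiset.sum_cons, ih, lineCount_cons, add_comm]

lemma lineCount_replicate (n : ℕ) (L : Submodule K V) (v : V) :
    lineCount (Multiset.replicate n L) v = if v ∈ L then n else 0 := by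
  split_ifs with h
  · exact (Multiset.countP_eq_card.2 fun M hM => Multiset.eq_of_mem_replicate hM ▸ h).trans
      (Multiset.card_replicate n L)
  · exact Multiset.countP_eq_zero.2 fun M hM => Multiset.eq_of_mem_replicate hM ▸ h

lemma lineCount_map_equiv (e : V ≃ₗ[K] W) (𝓛 : Multiset (Submodule K V)) (w : W) :
    lineCount (𝓛.map (Submodule.map (e : V →ₗ[K] W))) w = lineCount 𝓛 (e.symm w) := by
  rw [lineCount, lineCount, Multiset.countP_map, Multiset.countP_eq_card_filter]
  simp_rw [Submodule.mem_map_equiv]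

lemma IsLinePartition.map {σ : ℕ} {𝓛 : Multiset (Submodule K V)} (h : IsLinePartition σ 𝓛)
    (e : V ≃ₗ[K] W) : IsLinePartition σ (𝓛.map (Submodule.map (e : V →ₗ[K] W))) where
  finrank_eq_two L hL := by
    obtain ⟨M, hM, rfl⟩ := Multiset.mem_map.1 hL
    rw [LinearEquiv.finrank_map_eq, h.finrank_eq_two M hM]
  lineCount_eq w hw := by
    rw [lineCount_map_equiv, h.lineCount_eq _ (by simpa using hw)]

lemma isLinePartition_zero [Subsingleton V] (σ : ℕ) :
    IsLinePartition σ (0 : Multiset (Submodule K V)) :=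
  ⟨by simp, fun v hv => absurd (Subsingleton.elim v 0) hv⟩

lemma sum_lineCount [Fintype V] (𝓛 : Multiset (Submodule K V)) :
    ∑ v, lineCount 𝓛 v = (𝓛.map fun L : Submodule K V => Nat.card L).sum := by
  induction 𝓛 using Multiset.induction with
  | empty => simp [lineCount]
  | cons L 𝓛 ih =>
    simp only [lineCount_cons, Finset.sum_add_distrib, ih, Multiset.map_cons, Multiset.sum_cons,
      Finset.sum_boole, Nat.cast_id, add_comm, Nat.card_eq_fintype_card, Fintype.card_subtype]

lemma lineCount_zero_right (𝓛 : Multiset (Submodule K V)) : lineCount 𝓛 0 = Multiset.card 𝓛 :=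
  Multiset.countP_eq_card.2 fun L _ => L.zero_mem

theorem IsLinePartition.mul_card_sub_one [Fintype K] [Fintype V] {σ : ℕ}
    {𝓛 : Multiset (Submodule K V)} (h : IsLinePartition σ 𝓛) :
    σ * (Fintype.card V - 1) = Multiset.card 𝓛 * (Fintype.card K ^ 2 - 1) := by
  have hlines : ∑ v, lineCount 𝓛 v = Multiset.card 𝓛 * Fintype.card K ^ 2 := by
    rw [sum_lineCount, Multiset.map_congr rfl fun (L : Submodule K V) hL => by
      rw [Module.natCard_eq_pow_finrank (K := K), h.finrank_eq_two L hL, Nat.card_eq_fintype_card],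
      Multiset.map_const', Multiset.sum_replicate, smul_eq_mul]
  have hpoints : ∑ v, lineCount 𝓛 v = Multiset.card 𝓛 + σ * (Fintype.card V - 1) := by
    rw [← Finset.add_sum_erase _ _ (Finset.mem_univ 0), lineCount_zero_right,
      Finset.sum_congr rfl fun v hv => h.lineCount_eq v (Finset.ne_of_mem_erase hv),
      Finset.sum_const, Finset.card_erase_of_mem (Finset.mem_univ _), Finset.card_univ,
      smul_eq_mul, mul_comm]
  rw [Nat.mul_sub_one (Multiset.card 𝓛)]
  omega

end LinePartition

section Doubling

open scoped Classical
open Finset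

variable {K V F : Type*} [Field K] [AddCommGroup V] [Module K V] [Field F] [Algebra K F]

noncomputable def graphLine (L : Submodule K V) (g : L →ₗ[K] F) (c : F) : Submodule K (V × F) :=
  LinearMap.range (L.subtype.prod (LinearMap.mulLeft K c ∘ₗ g))

lemma mem_graphLine {L : Submodule K V} {g : L →ₗ[K] F} {c : F} {v : V} {w : F} :
    (v, w) ∈ graphLine L g c ↔ ∃ hv : v ∈ L, c * g ⟨v, hv⟩ = w := by
  simp [graphLine, Prod.ext_iff]

lemma finrank_graphLine (L : Submodule K V) (g : L →ₗ[K] F) (c : F) :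
    finrank K (graphLine L g c) = finrank K L :=
  LinearMap.finrank_range_of_inj fun _ _ h => Subtype.ext (congrArg Prod.fst h)

lemma zero_prod_notMem_graphLine (L : Submodule K V) (g : L →ₗ[K] F) (c : F) {w : F}
    (hw : w ≠ 0) : ((0 : V), w) ∉ graphLine L g c := by
  rw [mem_graphLine]
  rintro ⟨h0, hc⟩
  rw [show (⟨0, h0⟩ : L) = 0 from rfl, map_zero, mul_zero] at hc
  exact hw hc.symm

lemma card_filter_mem_graphLine [Fintype F] {L : Submodule K V} {g : L →ₗ[K] F}
    (hg : Function.Injective g) {v : V} (hv : v ≠ 0) (w : F) :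
    #{c | (v, w) ∈ graphLine L g c} = if v ∈ L then 1 else 0 := by
  split_ifs with hvL
  · have hgv : g ⟨v, hvL⟩ ≠ 0 := by
      rw [← map_zero g, hg.ne_iff]
      exact fun h => hv (congrArg Subtype.val h)
    rw [Finset.card_eq_one]
    refine ⟨w / g ⟨v, hvL⟩, ?_⟩
    ext c
    simp [mem_graphLine, hvL, eq_div_iff hgv]
  · simp [mem_graphLine, hvL]

lemma lineCount_graphLines [Fintype F] (L : Submodule K V) (g : L →ₗ[K] F) (x : V × F) :
    lineCount (Finset.univ.val.map (graphLine L g)) x = #{c | x ∈ graphLine L g c} := by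
  rw [lineCount, Multiset.countP_map]
  rfl

theorem IsLinePartition.exists_prod [Fintype F] (hF : finrank K F = 2) {σ : ℕ}
    {𝓛 : Multiset (Submodule K V)} (h : IsLinePartition σ 𝓛) :
    ∃ 𝓜 : Multiset (Submodule K (V × F)), IsLinePartition σ 𝓜 := by
  have : FiniteDimensional K F := Module.finite_of_finrank_pos (hF ▸ two_pos)
  have hiso : ∀ L : Submodule K V, ∃ g : L →ₗ[K] F, finrank K L = 2 → Function.Injective g := by
    intro L
    by_cases hL : finrank K L = 2
    · have : FiniteDimensional K L := Module.finite_of_finrank_pos (hL ▸ two_pos)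
      exact ⟨LinearEquiv.ofFinrankEq L F (hL.trans hF.symm), fun _ => LinearEquiv.injective _⟩
    · exact ⟨0, fun h => absurd h hL⟩
  choose g hg using hiso
  let vertical := LinearMap.range (LinearMap.inr K V F)
  refine ⟨Multiset.replicate σ vertical +
    𝓛.bind fun L => Finset.univ.val.map (graphLine L (g L)), ⟨fun M hM => ?_, ?_⟩⟩
  · rcases Multiset.mem_add.1 hM with hM | hM
    · rw [Multiset.eq_of_mem_replicate hM, LinearMap.finrank_range_of_inj LinearMap.inr_injective,
        hF]
    · obtain ⟨L, hL, hM⟩ := Multiset.mem_bind.1 hM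
      obtain ⟨c, -, rfl⟩ := Multiset.mem_map.1 hM
      rw [finrank_graphLine, h.finrank_eq_two L hL]
  · rintro ⟨v, w⟩ hvw
    rw [lineCount_add, lineCount_replicate, lineCount_bind]
    simp only [lineCount_graphLines]
    by_cases hv : v = 0
    · subst hv
      have hw : w ≠ 0 := by simpa using hvw
      rw [if_pos ⟨w, rfl⟩, Multiset.sum_eq_zero fun n hn => ?_, add_zero]
      obtain ⟨L, -, rfl⟩ := Multiset.mem_map.1 hn
      simp [zero_prod_notMem_graphLine _ _ _ hw]
    · have : (v, w) ∉ vertical := fun ⟨_, hx⟩ => hv (congrArg Prod.fst hx).symm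
      rw [if_neg this, zero_add, ← h.lineCount_eq v hv, ← sum_map_ite_mem_eq_lineCount]
      exact congrArg _ (Multiset.map_congr rfl fun L hL =>
        card_filter_mem_graphLine (hg L (h.finrank_eq_two L hL)) hv w)

end Doubling

section Binary

open Finset

lemma even_of_three_dvd_two_pow_sub_one {r : ℕ} (h : 3 ∣ 2 ^ r - 1) : Even r := by
  refine Nat.not_odd_iff_even.mp fun ⟨k, hk⟩ => ?_
  have h4 : 4 ^ k % 3 = 1 := by simp [Nat.pow_mod]
  have h2 : 2 ^ r = 2 * 4 ^ k := by rw [hk, pow_succ, pow_mul]; ring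
  omega

lemma coverCount_span_singleton {r : ℕ} (𝓛 : Multiset (Submodule (ZMod 2) (Vec r))) (v : Vec r) :
    coverCount 𝓛 (ZMod 2 ∙ v) = lineCount 𝓛 v := by
  classical
  rw [coverCount, lineCount, Multiset.countP_eq_card_filter]
  exact congrArg _ (Multiset.filter_congr fun W _ => Submodule.span_singleton_le_iff_mem v W)

lemma isPoint_iff {r : ℕ} {P : Submodule (ZMod 2) (Vec r)} :
    isPoint P ↔ ∃ v ≠ 0, P = ZMod 2 ∙ v :=
  Submodule.isAtom_iff_finrank_eq_one.symm.trans (atom_iff_nonzero_span P)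

lemma isLinePartition_iff {r σ : ℕ} {𝓛 : Multiset (Submodule (ZMod 2) (Vec r))} :
    IsLinePartition σ 𝓛 ↔ (∀ L ∈ 𝓛, isLine L) ∧ ∀ P, isPoint P → coverCount 𝓛 P = σ := by
  refine ⟨fun h => ⟨h.finrank_eq_two, fun P hP => ?_⟩, fun ⟨hline, hcov⟩ => ⟨hline, fun v hv => ?_⟩⟩
  · obtain ⟨v, hv, rfl⟩ := isPoint_iff.1 hP
    rw [coverCount_span_singleton, h.lineCount_eq v hv]
  · rw [← coverCount_span_singleton, hcov _ (isPoint_iff.2 ⟨v, hv, rfl⟩)]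

lemma exists_isLinePartition_vec_add_two {σ n : ℕ}
    (h : ∃ 𝓛 : Multiset (Submodule (ZMod 2) (Vec n)), IsLinePartition σ 𝓛) :
    ∃ 𝓛 : Multiset (Submodule (ZMod 2) (Vec (n + 2))), IsLinePartition σ 𝓛 := by
  obtain ⟨𝓛, h⟩ := h
  have : Fintype (GaloisField 2 2) := Fintype.ofFinite _
  have hF : finrank (ZMod 2) (GaloisField 2 2) = 2 := GaloisField.finrank 2 two_ne_zero
  obtain ⟨𝓜, h𝓜⟩ := h.exists_prod hF
  let e : (Vec n × GaloisField 2 2) ≃ₗ[ZMod 2] Vec (n + 2) :=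
    LinearEquiv.ofFinrankEq _ _ (by simp [hF])
  exact ⟨_, h𝓜.map e⟩

lemma exists_isLinePartition_vec_add_two_mul {σ n : ℕ}
    (h : ∃ 𝓛 : Multiset (Submodule (ZMod 2) (Vec n)), IsLinePartition σ 𝓛) (k : ℕ) :
    ∃ 𝓛 : Multiset (Submodule (ZMod 2) (Vec (n + 2 * k))), IsLinePartition σ 𝓛 := by
  induction k with
  | zero => exact h
  | succ k ih => exact exists_isLinePartition_vec_add_two ih

/-- The lines of the Fano plane are the kernels of the seven nonzero linear forms on `F_2^3`. -/
lemma exists_isLinePartition_vec_three :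
    ∃ 𝓛 : Multiset (Submodule (ZMod 2) (Vec 3)), IsLinePartition 3 𝓛 := by
  refine ⟨(univ.filter (· ≠ 0)).val.map fun u => LinearMap.ker (dotProductEquiv (ZMod 2) (Fin 3) u),
    ⟨fun L hL => ?_, fun v hv => ?_⟩⟩
  · obtain ⟨u, hu, rfl⟩ := Multiset.mem_map.1 hL
    have hu0 : dotProductEquiv (ZMod 2) (Fin 3) u ≠ 0 := by simpa using hu
    have := Module.Dual.finrank_ker_add_one_of_ne_zero hu0
    rw [Module.finrank_fin_fun] at this
    exact Nat.succ_injective this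
  · have hcount : ∀ v : Vec 3, v ≠ 0 → #{u : Vec 3 | u ≠ 0 ∧ u ⬝ᵥ v = 0} = 3 := by decide
    classical
    rw [lineCount, Multiset.countP_map, ← Finset.filter_val, Finset.filter_filter]
    refine Eq.trans (congrArg Finset.card (Finset.filter_congr fun u _ => ?_)) (hcount v hv)
    simp

end Binary

theorem line_spread_iff_even_general (r : ℕ) :
    ((∃ 𝓛 : Multiset (Submodule (ZMod 2) (Vec r)), (∀ L ∈ 𝓛, isLine L) ∧
        ∀ P, isPoint P → coverCount 𝓛 P = 1) ↔ Even r) ∧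
    (3 ≤ r → Odd r → ∃ 𝓛 : Multiset (Submodule (ZMod 2) (Vec r)), (∀ L ∈ 𝓛, isLine L) ∧
        ∀ P, isPoint P → coverCount 𝓛 P = 3) := by
  simp only [← isLinePartition_iff]
  refine ⟨⟨fun ⟨𝓛, h𝓛⟩ => ?_, fun ⟨k, hk⟩ => ?_⟩, fun h3 ⟨k, hk⟩ => ?_⟩
  · have hcount : 2 ^ r - 1 = Multiset.card 𝓛 * 3 := by
      simpa using h𝓛.mul_card_sub_one
    exact even_of_three_dvd_two_pow_sub_one (Dvd.intro_left _ hcount.symm)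
  · obtain ⟨𝓛, h𝓛⟩ := exists_isLinePartition_vec_add_two_mul (n := 0) ⟨0, isLinePartition_zero 1⟩ k
    obtain rfl : r = 0 + 2 * k := by omega
    exact ⟨𝓛, h𝓛⟩
  · obtain ⟨𝓛, h𝓛⟩ :=
      exists_isLinePartition_vec_add_two_mul exists_isLinePartition_vec_three (k - 1)
    obtain rfl : r = 3 + 2 * (k - 1) := by omega
    exact ⟨𝓛, h𝓛⟩

/-- The points of `PG(r-1,2)` can be partitioned into lines iff `r` is even (a line spread);
moreover for odd `r ≥ 3` the triple multiset of all points can be partitioned into lines. -/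
theorem line_spread_iff_even (r : ℕ) (hr : 2 ≤ r) :
    ((∃ 𝓛 : Multiset (Submodule (ZMod 2) (Vec r)), (∀ L ∈ 𝓛, isLine L) ∧
        ∀ P, isPoint P → coverCount 𝓛 P = 1) ↔ Even r) ∧
    (3 ≤ r → Odd r → ∃ 𝓛 : Multiset (Submodule (ZMod 2) (Vec r)), (∀ L ∈ 𝓛, isLine L) ∧
        ∀ P, isPoint P → coverCount 𝓛 P = 3) :=
  line_spread_iff_even_general r
end

section
/- With the hypotheses of the type-σ[r] − Σ ε_i[i] system: for a hyperplane H, let j be minimal with S_j not contained in H (j = r if H = S_{r-1}). Then the number of lines of S contained in H equals s_1 − Σ_{i=1}^{j-1} ε_i·2^{i-2}, where s_1 = (σ·(2^{r-2} − 1) − Σ_{i=2}^{r-1} ε_i·(2^{i-2} − 1) + ε_1/2)/3. Consequently ε_1 is even. -/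
open scoped Classical in
/-- The number of lines of the multiset `S` passing through the (nonzero) vector `v`. -/
noncomputable def lineCountThrough {r : ℕ} (S : Multiset (Submodule (ZMod 2) (Vec r)))
    (v : Vec r) : ℕ :=
  Multiset.card (S.filter (fun L => v ∈ L))

open Module

section Hyperplanes

variable {K V : Type*} [Field K] [AddCommGroup V] [Module K V] [FiniteDimensional K V]

theorem finrank_inf_add_one_of_not_le {H W : Submodule K V}
    (hH : finrank K H + 1 = finrank K V) (hW : ¬ W ≤ H) :
    finrank K ↥(W ⊓ H) + 1 = finrank K W := by
  have hlt : finrank K H < finrank K ↥(W ⊔ H) :=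
    Submodule.finrank_lt_finrank_of_lt (lt_of_le_of_ne le_sup_right
      fun h => hW (le_sup_left.trans h.symm.le))
  have := Submodule.finrank_le (W ⊔ H)
  have := Submodule.finrank_sup_add_finrank_inf_eq W H
  omega

theorem exists_finrank_add_one_eq_and_not_le {W : Submodule K V} (hW : W ≠ ⊥) :
    ∃ H : Submodule K V, finrank K H + 1 = finrank K V ∧ ¬ W ≤ H := by
  obtain ⟨v, hvW, hv⟩ := W.exists_mem_ne_zero_of_ne_bot hW
  obtain ⟨f, hf⟩ := Module.Projective.exists_dual_ne_zero K hv
  exact ⟨LinearMap.ker f, Module.Dual.finrank_ker_add_one_of_ne_zero (by rintro rfl; simp at hf),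
    fun h => hf (h hvW)⟩

end Hyperplanes

section

open scoped Classical

variable {r : ℕ}

theorem isHyperplane_iff_finrank_add_one {H : Submodule (ZMod 2) (Vec r)} (hr : 1 ≤ r) :
    isHyperplane H ↔ finrank (ZMod 2) H + 1 = finrank (ZMod 2) (Vec r) := by
  rw [isHyperplane, finrank_fin_fun]
  omega

/-- Over `𝔽₂` the points of a subspace are its nonzero vectors. -/
noncomputable def pointsOf (W : Submodule (ZMod 2) (Vec r)) : Finset (Vec r) :=
  {v | v ∈ W ∧ v ≠ 0}

theorem card_pointsOf (W : Submodule (ZMod 2) (Vec r)) :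
    ((pointsOf W).card : ℤ) = 2 ^ finrank (ZMod 2) W - 1 := by
  have hW : pointsOf W = ({v | v ∈ W} : Finset (Vec r)).erase 0 := by
    ext v; simp [pointsOf, and_comm]
  rw [hW, Finset.card_erase_of_mem (by simp), ← Fintype.card_subtype,
    card_eq_pow_finrank (K := ZMod 2) (V := W), ZMod.card, Nat.cast_sub Nat.one_le_two_pow]
  push_cast
  rfl

theorem filter_mem_pointsOf (W X : Submodule (ZMod 2) (Vec r)) :
    (pointsOf W).filter (· ∈ X) = pointsOf (X ⊓ W) := by
  ext v
  simp only [pointsOf, ne_eq, Finset.mem_filter, Finset.mem_univ, true_and, Submodule.mem_inf]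
  tauto

theorem sum_lineCountThrough (T : Finset (Vec r)) (S : Multiset (Submodule (ZMod 2) (Vec r))) :
    ∑ v ∈ T, lineCountThrough S v = (S.map fun L => (T.filter (· ∈ L)).card).sum := by
  induction S using Multiset.induction with
  | empty => simp [lineCountThrough]
  | cons L S ih =>
    simp only [lineCountThrough, Multiset.filter_cons, Multiset.card_add, Finset.sum_add_distrib,
      Multiset.map_cons, Multiset.sum_cons] at *
    rw [ih, Finset.card_filter]
    congr 1
    exact Finset.sum_congr rfl fun v _ => by split_ifs <;> rfl

theorem sum_map_ite_le_eq_card_add_two_mul_linesIn (S : Multiset (Submodule (ZMod 2) (Vec r)))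
    (W : Submodule (ZMod 2) (Vec r)) :
    (S.map fun L => if L ≤ W then 3 else 1).sum = Multiset.card S + 2 * linesIn S W := by
  induction S using Multiset.induction with
  | empty => simp [linesIn]
  | cons L S ih =>
    simp only [linesIn, Multiset.filter_cons, Multiset.map_cons, Multiset.sum_cons,
      Multiset.card_cons, Multiset.card_add] at *
    rw [ih]
    split_ifs <;> simp <;> ring

theorem sum_pointsOf_lineCountThrough_eq_card_add_two_mul_linesIn
    {S : Multiset (Submodule (ZMod 2) (Vec r))} (hlines : ∀ L ∈ S, isLine L)
    {W : Submodule (ZMod 2) (Vec r)}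
    (hmeet : ∀ L ∈ S, ¬ L ≤ W → finrank (ZMod 2) ↥(L ⊓ W) = 1) :
    ∑ v ∈ pointsOf W, lineCountThrough S v = Multiset.card S + 2 * linesIn S W := by
  rw [sum_lineCountThrough, ← sum_map_ite_le_eq_card_add_two_mul_linesIn]
  congr 1
  refine Multiset.map_congr rfl fun L hL => ?_
  have hcard := card_pointsOf (L ⊓ W)
  rw [← filter_mem_pointsOf] at hcard
  split_ifs with h
  · rw [inf_eq_left.mpr h, hlines L hL] at hcard
    omega
  · rw [hmeet L hL h] at hcard
    omega

theorem finrank_flag_inf_hyperplane {Flag : ℕ → Submodule (ZMod 2) (Vec r)}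
    (hdim : ∀ i ∈ Finset.Icc 1 (r - 1), finrank (ZMod 2) (Flag i) = i)
    (hmono : ∀ i j, 1 ≤ i → i ≤ j → j ≤ r - 1 → Flag i ≤ Flag j)
    (hr : 1 ≤ r) {H : Submodule (ZMod 2) (Vec r)} (hH : isHyperplane H)
    {j : ℕ} (hj : 1 ≤ j) (hbelow : ∀ i, 1 ≤ i → i < j → Flag i ≤ H)
    (hnotin : j ≤ r - 1 → ¬ Flag j ≤ H) {i : ℕ} (hi : i ∈ Finset.Icc 1 (r - 1)) :
    finrank (ZMod 2) ↥(Flag i ⊓ H) = if i < j then i else i - 1 := by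
  obtain ⟨hi1, hir⟩ := Finset.mem_Icc.mp hi
  split_ifs with hij
  · rw [inf_eq_left.mpr (hbelow i hi1 hij), hdim i hi]
  · have hnle : ¬ Flag i ≤ H := fun hle =>
      hnotin (by omega) ((hmono j i hj (by omega) hir).trans hle)
    have := finrank_inf_add_one_of_not_le ((isHyperplane_iff_finrank_add_one hr).mp hH) hnle
    rw [hdim i hi] at this
    omega

theorem linesIn_formula_of_counts {r j : ℕ} (hr : 2 ≤ r) (hjr : j ≤ r) {σ n ℓ : ℚ} {ε : ℕ → ℚ}
    (hH : n + 2 * ℓ = σ * (2 ^ (r - 1) - 1) -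
      ∑ i ∈ Finset.Icc 1 (r - 1), ε i * (2 ^ (if i < j then i else i - 1) - 1))
    (htop : 3 * n = σ * (2 ^ r - 1) - ∑ i ∈ Finset.Icc 1 (r - 1), ε i * (2 ^ i - 1)) :
    ℓ = (σ * (2 ^ (r - 2) - 1) - ∑ i ∈ Finset.Icc 2 (r - 1), ε i * (2 ^ (i - 2) - 1)
        + ε 1 / 2) / 3 - ∑ i ∈ Finset.Icc 1 (j - 1), ε i * 2 ^ i / 4 := by
  have hterm : ∀ i ∈ Finset.Icc 1 (r - 1),
      3 * (ε i * (2 ^ (if i < j then i else i - 1) - 1)) - ε i * (2 ^ i - 1) =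
        2 * (ε i * (2 ^ (i - 2) - 1)) - (if i = 1 then ε i else 0)
          + 6 * (if i < j then ε i * 2 ^ i / 4 else 0) := by
    intro i hi
    obtain rfl | ⟨k, rfl⟩ : i = 1 ∨ ∃ k, i = k + 2 :=
      (Nat.lt_or_ge i 2).imp (by grind) fun h => ⟨i - 2, by omega⟩
    · rw [if_pos rfl]
      split_ifs <;> ring
    · simp only [show k + 2 - 1 = k + 1 by omega, Nat.add_sub_cancel, show k + 2 ≠ 1 by omega,
        if_false]
      split_ifs <;> ring
  have hkey : 3 * ∑ i ∈ Finset.Icc 1 (r - 1), ε i * (2 ^ (if i < j then i else i - 1) - 1)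
      - ∑ i ∈ Finset.Icc 1 (r - 1), ε i * (2 ^ i - 1) =
        2 * ∑ i ∈ Finset.Icc 1 (r - 1), ε i * (2 ^ (i - 2) - 1)
          - ∑ i ∈ Finset.Icc 1 (r - 1), (if i = 1 then ε i else 0)
          + 6 * ∑ i ∈ Finset.Icc 1 (r - 1), (if i < j then ε i * 2 ^ i / 4 else 0) := by
    simp only [Finset.mul_sum, ← Finset.sum_sub_distrib, ← Finset.sum_add_distrib]
    exact Finset.sum_congr rfl hterm
  have hfrom2 : ∑ i ∈ Finset.Icc 2 (r - 1), ε i * (2 ^ (i - 2) - 1) =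
      ∑ i ∈ Finset.Icc 1 (r - 1), ε i * (2 ^ (i - 2) - 1) :=
    Finset.sum_subset (Finset.Icc_subset_Icc_left one_le_two) fun i hi hi2 => by
      -- the `i = 1` term is `ε 1 * (2 ^ 0 - 1)`, as `1 - 2 = 0` in `ℕ`
      obtain rfl : i = 1 := by simp only [Finset.mem_Icc] at hi hi2; omega
      simp
  have hone : ∑ i ∈ Finset.Icc 1 (r - 1), (if i = 1 then ε i else 0) = ε 1 := by
    rw [Finset.sum_ite_eq']
    exact if_pos (Finset.mem_Icc.mpr ⟨le_rfl, by omega⟩)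
  have hbelow : ∑ i ∈ Finset.Icc 1 (j - 1), ε i * 2 ^ i / 4 =
      ∑ i ∈ Finset.Icc 1 (r - 1), (if i < j then ε i * 2 ^ i / 4 else 0) := by
    rw [← Finset.sum_filter]
    congr 1
    ext i
    simp only [Finset.mem_Icc, Finset.mem_filter]
    omega
  obtain ⟨m, rfl⟩ := Nat.exists_eq_add_of_le' hr
  simp only [show m + 2 - 1 = m + 1 by omega, Nat.add_sub_cancel] at *
  linear_combination (1 / 2) * hH - (1 / 6) * htop - (1 / 6) * hkey + (1 / 3) * hfrom2
    + (1 / 6) * hone + hbelow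

/-- `S` is a system of type `σ[r] − ∑ ε_i [F_i]`. -/
def IsOfType (Flag : ℕ → Submodule (ZMod 2) (Vec r)) (σ : ℕ) (ε : ℕ → ℤ)
    (S : Multiset (Submodule (ZMod 2) (Vec r))) : Prop :=
  ∀ v : Vec r, v ≠ 0 → (lineCountThrough S v : ℤ) =
    (σ : ℤ) - ∑ i ∈ Finset.Icc 1 (r - 1), ε i * (if v ∈ Flag i then 1 else 0)

section IsOfType

variable {Flag : ℕ → Submodule (ZMod 2) (Vec r)} {σ : ℕ} {ε : ℕ → ℤ}
  {S : Multiset (Submodule (ZMod 2) (Vec r))}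

theorem IsOfType.sum_pointsOf_lineCountThrough (hS : IsOfType Flag σ ε S)
    (W : Submodule (ZMod 2) (Vec r)) :
    ∑ v ∈ pointsOf W, (lineCountThrough S v : ℤ) = σ * (2 ^ finrank (ZMod 2) W - 1) -
      ∑ i ∈ Finset.Icc 1 (r - 1), ε i * (2 ^ finrank (ZMod 2) ↥(Flag i ⊓ W) - 1) := by
  rw [Finset.sum_congr rfl fun v hv => hS v (Finset.mem_filter.mp hv).2.2,
    Finset.sum_sub_distrib, Finset.sum_const, nsmul_eq_mul, card_pointsOf, mul_comm,
    Finset.sum_comm]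
  congr 1
  refine Finset.sum_congr rfl fun i _ => ?_
  rw [← Finset.mul_sum, ← card_pointsOf, ← filter_mem_pointsOf, Finset.card_filter]
  push_cast
  rfl

theorem IsOfType.card_add_two_mul_linesIn (hS : IsOfType Flag σ ε S)
    (hlines : ∀ L ∈ S, isLine L) (hr : 1 ≤ r) {H : Submodule (ZMod 2) (Vec r)}
    (hH : isHyperplane H) :
    (Multiset.card S + 2 * linesIn S H : ℤ) = σ * (2 ^ (r - 1) - 1) -
      ∑ i ∈ Finset.Icc 1 (r - 1), ε i * (2 ^ finrank (ZMod 2) ↥(Flag i ⊓ H) - 1) := by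
  have hmeet : ∀ L ∈ S, ¬ L ≤ H → finrank (ZMod 2) ↥(L ⊓ H) = 1 := fun L hL h => by
    have := finrank_inf_add_one_of_not_le ((isHyperplane_iff_finrank_add_one hr).mp hH) h
    rw [hlines L hL] at this
    omega
  have hsum := hS.sum_pointsOf_lineCountThrough H
  rw [hH] at hsum
  rw [← hsum]
  exact_mod_cast (sum_pointsOf_lineCountThrough_eq_card_add_two_mul_linesIn hlines hmeet).symm

theorem IsOfType.three_mul_card (hS : IsOfType Flag σ ε S) (hlines : ∀ L ∈ S, isLine L)
    (hdim : ∀ i ∈ Finset.Icc 1 (r - 1), finrank (ZMod 2) (Flag i) = i) :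
    (3 * Multiset.card S : ℤ) = σ * (2 ^ r - 1) -
      ∑ i ∈ Finset.Icc 1 (r - 1), ε i * (2 ^ i - 1) := by
  have hall : linesIn S ⊤ = Multiset.card S := by
    rw [linesIn, Multiset.filter_eq_self.mpr fun L _ => le_top]
  have := sum_pointsOf_lineCountThrough_eq_card_add_two_mul_linesIn hlines
    (W := ⊤) fun L _ h => absurd le_top h
  rw [hall] at this
  have hflag : ∑ i ∈ Finset.Icc 1 (r - 1), ε i * (2 ^ finrank (ZMod 2) ↥(Flag i ⊓ ⊤) - 1) =
      ∑ i ∈ Finset.Icc 1 (r - 1), ε i * (2 ^ i - 1) :=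
    Finset.sum_congr rfl fun i hi => by rw [inf_top_eq, hdim i hi]
  have hsum := hS.sum_pointsOf_lineCountThrough ⊤
  rw [finrank_top, finrank_fin_fun, hflag] at hsum
  rw [← hsum]
  exact_mod_cast (by omega : 3 * Multiset.card S = ∑ v ∈ pointsOf ⊤, lineCountThrough S v)

theorem IsOfType.linesIn_hyperplane_eq (hS : IsOfType Flag σ ε S)
    (hlines : ∀ L ∈ S, isLine L) (hr : 2 ≤ r)
    (hdim : ∀ i ∈ Finset.Icc 1 (r - 1), finrank (ZMod 2) (Flag i) = i)
    (hmono : ∀ i j, 1 ≤ i → i ≤ j → j ≤ r - 1 → Flag i ≤ Flag j)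
    {H : Submodule (ZMod 2) (Vec r)} (hH : isHyperplane H) {j : ℕ} (hj : 1 ≤ j) (hjr : j ≤ r)
    (hbelow : ∀ i, 1 ≤ i → i < j → Flag i ≤ H) (hnotin : j ≤ r - 1 → ¬ Flag j ≤ H) :
    (linesIn S H : ℚ) =
      ((σ : ℚ) * (2 ^ (r - 2) - 1) - ∑ i ∈ Finset.Icc 2 (r - 1), (ε i : ℚ) * (2 ^ (i - 2) - 1)
          + (ε 1 : ℚ) / 2) / 3
        - ∑ i ∈ Finset.Icc 1 (j - 1), (ε i : ℚ) * 2 ^ i / 4 := by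
  have hflag : ∑ i ∈ Finset.Icc 1 (r - 1), ε i * (2 ^ finrank (ZMod 2) ↥(Flag i ⊓ H) - 1) =
      ∑ i ∈ Finset.Icc 1 (r - 1), ε i * (2 ^ (if i < j then i else i - 1) - 1) :=
    Finset.sum_congr rfl fun i hi => by
      rw [finrank_flag_inf_hyperplane hdim hmono (by omega) hH hj hbelow hnotin hi]
  have hhyp := hS.card_add_two_mul_linesIn hlines (by omega) hH
  rw [hflag] at hhyp
  have htop := hS.three_mul_card hlines hdim
  exact linesIn_formula_of_counts hr hjr (n := Multiset.card S) (by exact_mod_cast hhyp)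
    (by exact_mod_cast htop)

end IsOfType

end

open scoped Classical in
/-- Hyperplane intersection numbers of a system of type `σ[r] - ∑ ε_i [i]`: if `j` is
minimal with `Flag j ≰ H` (with `j = r` if `H = Flag (r-1)`), then the number of lines of
`S` contained in `H` equals `s_1 - ∑_{i=1}^{j-1} ε_i·2^{i-2}` where
`s_1 = (σ·(2^{r-2}-1) - ∑_{i=2}^{r-1} ε_i·(2^{i-2}-1) + ε_1/2)/3`; moreover `ε_1` is even. -/
theorem type_hyperplane_count (r : ℕ) (hr : 3 ≤ r)
    (Flag : ℕ → Submodule (ZMod 2) (Vec r))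
    (hdim : ∀ i ∈ Finset.Icc 1 (r - 1), Module.finrank (ZMod 2) (Flag i) = i)
    (hmono : ∀ i j, 1 ≤ i → i ≤ j → j ≤ r - 1 → Flag i ≤ Flag j)
    (σ : ℕ) (ε : ℕ → ℤ)
    (S : Multiset (Submodule (ZMod 2) (Vec r))) (hlines : ∀ L ∈ S, isLine L)
    (htype : ∀ v : Vec r, v ≠ 0 → (lineCountThrough S v : ℤ) =
        (σ : ℤ) - ∑ i ∈ Finset.Icc 1 (r - 1), ε i * (if v ∈ Flag i then 1 else 0))
    (H : Submodule (ZMod 2) (Vec r)) (hH : isHyperplane H)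
    (j : ℕ) (hj1 : 1 ≤ j) (hjr : j ≤ r)
    (hbelow : ∀ i, 1 ≤ i → i < j → Flag i ≤ H)
    (hnotin : j ≤ r - 1 → ¬ Flag j ≤ H) :
    (linesIn S H : ℚ) =
      ((σ : ℚ) * (2 ^ (r - 2) - 1)
          - (∑ i ∈ Finset.Icc 2 (r - 1), (ε i : ℚ) * (2 ^ (i - 2) - 1))
          + (ε 1 : ℚ) / 2) / 3
        - ∑ i ∈ Finset.Icc 1 (j - 1), (ε i : ℚ) * 2 ^ i / 4 ∧
    2 ∣ ε 1 := by
  have hS : IsOfType Flag σ ε S := htype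
  refine ⟨hS.linesIn_hyperplane_eq hlines (by omega) hdim hmono hH hj1 hjr hbelow hnotin, ?_⟩
  have hF₁ : Flag 1 ≠ ⊥ :=
    Submodule.one_le_finrank_iff.mp (hdim 1 (Finset.mem_Icc.mpr ⟨le_rfl, by omega⟩)).ge
  obtain ⟨H₁, hH₁, hnotle⟩ := exists_finrank_add_one_eq_and_not_le hF₁
  have hcount := hS.linesIn_hyperplane_eq hlines (by omega) hdim hmono
    ((isHyperplane_iff_finrank_add_one (by omega)).mpr hH₁) le_rfl (by omega)
    (fun i hi hi1 => absurd hi1 (by omega)) fun _ => hnotle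
  simp only [Nat.sub_self, Finset.Icc_eq_empty_of_lt one_pos, Finset.sum_empty, sub_zero]
    at hcount
  refine ⟨3 * linesIn S H₁ - σ * (2 ^ (r - 2) - 1) +
    ∑ i ∈ Finset.Icc 2 (r - 1), ε i * (2 ^ (i - 2) - 1), ?_⟩
  exact_mod_cast (by linarith : (ε 1 : ℚ) = 2 * (3 * linesIn S H₁ - σ * (2 ^ (r - 2) - 1) +
    ∑ i ∈ Finset.Icc 2 (r - 1), (ε i : ℚ) * (2 ^ (i - 2) - 1)))
end
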